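/- arXiv:2005.10788 — 7 statements merged into one kernel-verified Lean document; each statement's English description precedes it below -/
import Mathlib

section
/- If F: 𝔽₂ⁿ → 𝔽₂ⁿ is a quadratic APN function and a ∈ 𝔽₂ⁿ is nonzero, then the set B_a(F) = {F(x) + F(x+a) : x ∈ 𝔽₂ⁿ} is either an affine subspace of 𝔽₂ⁿ of dimension n−1, i.e., B_a(F) = {y : u·y = ε} for some nonzero u ∈ 𝔽₂ⁿ and ε ∈ 𝔽₂. -/
open Finset

abbrev V (n : ℕ) : Type := Fin n → ZMod 2

def dotp {n : ℕ} (u y : V n) : ZMod 2 := ∑ i, u i * y i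

def IsAPN {n : ℕ} (F : V n → V n) : Prop :=
  ∀ a : V n, a ≠ 0 → ∀ b : V n,
    (Finset.univ.filter (fun x => F x + F (x + a) = b)).card ≤ 2

/-- `F` has algebraic degree exactly 2: all second derivatives vanish
(degree ≤ 2) and some first derivative is non-constant (degree ≥ 2). -/
def IsQuadratic {n : ℕ} (F : V n → V n) : Prop :=
  (∀ x y a : V n,
    F (x + y + a) + F (x + y) + F (x + a) + F x
      + F (y + a) + F y + F a + F 0 = 0) ∧
  (∃ x a : V n, F (x + a) + F x + F a + F 0 ≠ 0)

/-- `Φ` and `φ` describe the sets `B_a(F)` as affine hyperplanes. -/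
def PhiSpec {n : ℕ} (F Φ : V n → V n) (φ : V n → ZMod 2) : Prop :=
  Φ 0 = 0 ∧ φ 0 = 1 ∧
  ∀ a : V n, a ≠ 0 → Φ a ≠ 0 ∧
    {y : V n | ∃ x, F x + F (x + a) = y} = {y : V n | dotp (Φ a) y = φ a}

def wt {n : ℕ} (a : V n) : ℕ := (Finset.univ.filter (fun i => a i = 1)).card

/-- ANF coefficient of `f` at the monomial with support `a` (Möbius inversion). -/
def anfCoeff {n : ℕ} (f : V n → ZMod 2) (a : V n) : ZMod 2 :=
  ∑ x ∈ Finset.univ.filter (fun x : V n => ∀ i, x i = 1 → a i = 1), f x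

/-- Algebraic degree of a Boolean function. -/
def degB {n : ℕ} (f : V n → ZMod 2) : ℕ :=
  Finset.sup (Finset.univ.filter (fun a : V n => anfCoeff f a ≠ 0)) wt

/-- The monomial with support `a`, evaluated at `x`. -/
def mono {n : ℕ} (a x : V n) : ZMod 2 :=
  ∏ i ∈ Finset.univ.filter (fun i => a i = 1), x i

def walsh {n : ℕ} (f : V n → ZMod 2) (u : V n) : ℤ :=
  ∑ x : V n, (-1 : ℤ) ^ ((f x + dotp u x).val)

/-- The associated function `γ_G(a,b) = 1` as a proposition. -/
def gammaP {n : ℕ} (G : V n → V n) (a b : V n) : Prop :=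
  a ≠ 0 ∧ ∃ x, G x + G (x + a) = b

/-!
For a quadratic `F` the derivative `x ↦ F x + F (x + a)`, shifted by the constant `F 0 + F a`,
is additive, hence `𝔽₂`-linear, so `B_a(F)` is a coset of its range. The shifted derivative
vanishes exactly on the solutions of `F x + F (x + a) = F 0 + F a`, which include `0` and `a`;
APN forces these to be all, so the kernel is the line spanned by `a`. By rank–nullity the range
is then a hyperplane, i.e. the kernel of a nonzero linear form `y ↦ u · y`, and its coset
`B_a(F)` is `{y | u · y = ε}`.
-/

open Module LinearMap

section CharTwo

variable {M N : Type*} [AddCommGroup M] [Module (ZMod 2) M] [AddCommGroup N] [Module (ZMod 2) N]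
  {F : M → N} (hF : ∀ x y a : M, F (x + y + a) + F (x + y) + F (x + a) + F x
      + F (y + a) + F y + F a + F 0 = 0) (a : M)

def derivLinearMap : M →ₗ[ZMod 2] N :=
  (AddMonoidHom.mk' (fun x => F x + F (x + a) + (F 0 + F a)) fun x y => by
    rw [← sub_eq_zero, ZModModule.sub_eq_add, ← hF x y a]
    calc _ = F (x + y + a) + F (x + y) + F (x + a) + F x + F (y + a) + F y + F a + F 0
          + (F 0 + F 0) + (F a + F a) := by abel
      _ = _ := by simp only [ZModModule.add_self, add_zero]).toZModLinearMap 2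

lemma derivLinearMap_apply (x : M) :
    derivLinearMap hF a x = F x + F (x + a) + (F 0 + F a) := rfl

lemma setOf_deriv_eq_preimage_range :
    {y : N | ∃ x, F x + F (x + a) = y} =
      {y : N | y + (F 0 + F a) ∈ range (derivLinearMap hF a)} := by
  ext y
  simp only [Set.mem_ofPred_eq, LinearMap.mem_range, derivLinearMap_apply, add_left_inj]

lemma ker_derivLinearMap_eq_span [Fintype M] [DecidableEq M] [DecidableEq N] (ha : a ≠ 0)
    (hcard : (univ.filter fun x => F x + F (x + a) = F 0 + F a).card ≤ 2) :
    ker (derivLinearMap hF a) = Submodule.span (ZMod 2) {a} := by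
  set T := univ.filter fun x => F x + F (x + a) = F 0 + F a
  have hT : T = {0, a} := by
    refine (eq_of_subset_of_card_le (fun x hx => ?_) ?_).symm
    · rcases mem_insert.mp hx with rfl | hx
      · simp [T]
      · simp [T, mem_singleton.mp hx, ZModModule.add_self, add_comm]
    · rwa [card_pair ha.symm]
  apply le_antisymm
  · intro x hx
    have hxT : x ∈ T := by
      simpa [T, derivLinearMap_apply, add_eq_zero_iff_eq_neg, ZModModule.neg_eq_self] using hx
    rcases mem_insert.mp (hT ▸ hxT) with rfl | hx
    · exact Submodule.zero_mem _
    · rw [mem_singleton.mp hx]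
      exact Submodule.mem_span_singleton_self a
  · rw [Submodule.span_le, Set.singleton_subset_iff]
    show F a + F (a + a) + (F 0 + F a) = 0
    rw [ZModModule.add_self a, ZModModule.add_add_add_cancel, ZModModule.add_self]

end CharTwo

lemma LinearMap.finrank_quotient_range_eq_finrank_ker {K W : Type*} [Field K] [AddCommGroup W]
    [Module K W] [FiniteDimensional K W] (L : W →ₗ[K] W) :
    finrank K (W ⧸ range L) = finrank K (ker L) := by
  have := L.finrank_range_add_finrank_ker
  have := (range L).finrank_quotient_add_finrank
  omega

lemma Submodule.exists_dual_ne_zero_ker_eq {K W : Type*} [Field K] [AddCommGroup W] [Module K W]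
    {p : Submodule K W} (hp : finrank K (W ⧸ p) = 1) :
    ∃ f : Dual K W, f ≠ 0 ∧ ker f = p := by
  have := Module.finite_of_finrank_pos (hp ▸ one_pos)
  obtain ⟨e⟩ : Nonempty ((W ⧸ p) ≃ₗ[K] K) :=
    FiniteDimensional.nonempty_linearEquiv_of_finrank_eq (by rw [hp, finrank_self])
  have hker : ker (e.toLinearMap ∘ₗ p.mkQ) = p := by
    rw [ker_comp, LinearEquiv.ker, Submodule.comap_bot, Submodule.ker_mkQ]
  refine ⟨e.toLinearMap ∘ₗ p.mkQ, fun h0 => ?_, hker⟩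
  rw [h0, ker_zero] at hker
  rw [← hker, finrank_zero_of_subsingleton] at hp
  exact zero_ne_one hp

lemma Submodule.exists_dotProduct_eq_zero_iff {K ι : Type*} [Field K] [Fintype ι] [DecidableEq ι]
    {p : Submodule K (ι → K)} (hp : finrank K ((ι → K) ⧸ p) = 1) :
    ∃ u : ι → K, u ≠ 0 ∧ ∀ y, y ∈ p ↔ u ⬝ᵥ y = 0 := by
  obtain ⟨f, hf, hker⟩ := p.exists_dual_ne_zero_ker_eq hp
  refine ⟨(dotProductEquiv K ι).symm f, by simpa using hf, fun y => ?_⟩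
  have hfy : (dotProductEquiv K ι).symm f ⬝ᵥ y = f y := by
    conv_rhs => rw [← (dotProductEquiv K ι).apply_symm_apply f]
    rfl
  rw [hfy, ← hker, mem_ker]

theorem stmt0 {n : ℕ} (F : V n → V n) (hq : IsQuadratic F) (hAPN : IsAPN F)
    (a : V n) (ha : a ≠ 0) :
    ∃ u : V n, u ≠ 0 ∧ ∃ ε : ZMod 2,
      {y : V n | ∃ x, F x + F (x + a) = y} = {y : V n | dotp u y = ε} := by
  classical
  have hker : finrank (ZMod 2) (ker (derivLinearMap hq.1 a)) = 1 := by
    rw [ker_derivLinearMap_eq_span hq.1 a ha (hAPN a ha _)]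
    exact finrank_span_singleton ha
  obtain ⟨u, hu, hrange⟩ := Submodule.exists_dotProduct_eq_zero_iff
    ((derivLinearMap hq.1 a).finrank_quotient_range_eq_finrank_ker.trans hker)
  refine ⟨u, hu, dotp u (F 0 + F a), ?_⟩
  rw [setOf_deriv_eq_preimage_range hq.1]
  ext y
  rw [Set.mem_ofPred_eq, Set.mem_ofPred_eq, hrange]
  show u ⬝ᵥ (y + (F 0 + F a)) = 0 ↔ u ⬝ᵥ y = u ⬝ᵥ (F 0 + F a)
  rw [dotProduct_add, add_eq_zero_iff_eq_neg, ZModModule.neg_eq_self]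
end

section
/- Let F: 𝔽₂ⁿ → 𝔽₂ⁿ be a quadratic APN function with n odd. Then the map Φ_F: 𝔽₂ⁿ → 𝔽₂ⁿ, defined by Φ_F(0)=0 and, for a ≠ 0, Φ_F(a) being the unique nonzero vector u with B_a(F) = {y : u·y = ε} for some ε ∈ 𝔽₂, is a permutation of 𝔽₂ⁿ. -/
open Finset

/-!
Let `u ≠ 0`. The component `f = u·F` has vanishing second derivatives, so each derivative
`D_a f` is affine, and balanced unless constant. In the identity
`(∑ₓ (-1)^{f x})² = ∑ₐ ∑ₓ (-1)^{D_a f x}`, if no `D_a f` with `a ≠ 0` were constant, only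
`a = 0` would contribute and the right-hand side would be `2ⁿ`, not a square for odd `n`.
A constant `D_a f` puts `B_a(F)` inside a hyperplane `u·y = c`, so `Φ a = u`.
Hence `Φ` is surjective, so bijective.
-/

lemma dotp_add_right {n : ℕ} (u y z : V n) : dotp u (y + z) = dotp u y + dotp u z :=
  dotProduct_add u y z

lemma dotp_single_right {n : ℕ} (u : V n) (j : Fin n) (c : ZMod 2) :
    dotp u (Pi.single j c) = u j * c :=
  dotProduct_single u c j

lemma zmod_two_eq_one_of_ne_zero : ∀ {t : ZMod 2}, t ≠ 0 → t = 1 := by decide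

lemma eq_of_hyperplane_subset {n : ℕ} {u v : V n} {c d : ZMod 2} (hu : u ≠ 0) (hv : v ≠ 0)
    (h : ∀ y, dotp v y = c → dotp u y = d) : u = v := by
  obtain ⟨j, hj⟩ := Function.ne_iff.mp hv
  have hvj : v j = 1 := zmod_two_eq_one_of_ne_zero hj
  -- shifting `y` by `(v·y + c) e_j` puts it on the hyperplane `v·y = c`
  have hline (y : V n) : dotp u y + u j * (dotp v y + c) = d := by
    have := h (y + Pi.single j (dotp v y + c)) (by
      rw [dotp_add_right, dotp_single_right, hvj]; grind)
    rwa [dotp_add_right, dotp_single_right] at this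
  have hd : u j * c = d := by simpa [dotp] using hline 0
  have hcoord (i : Fin n) : u i = u j * v i := by
    have := hline (Pi.single i 1)
    simp only [dotp_single_right, mul_one] at this
    grind
  have huj : u j = 1 := by
    refine zmod_two_eq_one_of_ne_zero fun h0 => hu (funext fun i => ?_)
    simp [hcoord i, h0]
  exact funext fun i => by simp [hcoord i, huj]

def SecondDerivsVanish {G M : Type*} [AddCommGroup G] [AddCommGroup M] (f : G → M) : Prop :=
  ∀ x y a : G, f (x + y + a) + f (x + y) + f (x + a) + f x + f (y + a) + f y + f a + f 0 = 0

section SecondDerivsVanish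

variable {G : Type*} [AddCommGroup G]

lemma SecondDerivsVanish.comp_addMonoidHom {M N : Type*} [AddCommGroup M] [AddCommGroup N]
    {f : G → M} (hf : SecondDerivsVanish f) (L : M →+ N) : SecondDerivsVanish (L ∘ f) := by
  intro x y a
  simpa only [Function.comp_apply, map_add, map_zero] using congrArg L (hf x y a)

lemma SecondDerivsVanish.deriv_add_const_map_add {f : G → ZMod 2} (hf : SecondDerivsVanish f)
    (a x y : G) :
    f (x + y) + f (x + y + a) + (f 0 + f a) =
      (f x + f (x + a) + (f 0 + f a)) + (f y + f (y + a) + (f 0 + f a)) := by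
  have := hf x y a
  grind

end SecondDerivsVanish

def chi (s : ZMod 2) : ℤ := (-1) ^ s.val

lemma chi_add : ∀ s t : ZMod 2, chi (s + t) = chi s * chi t := by decide

lemma chi_one : chi 1 = -1 := rfl

section Sums

variable {G : Type*} [AddCommGroup G] [Fintype G]

lemma sum_chi_eq_zero_of_map_add {g : G → ZMod 2} (hg : ∀ x y, g (x + y) = g x + g y)
    {x₀ : G} (hx₀ : g x₀ ≠ 0) : ∑ x, chi (g x) = 0 := by
  have hsum : ∑ x, chi (g x) = -∑ x, chi (g x) := calc
    ∑ x, chi (g x) = ∑ x, chi (g (x + x₀)) := (Equiv.sum_comp (Equiv.addRight x₀) _).symm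
    _ = -∑ x, chi (g x) := by
      simp only [hg, chi_add, zmod_two_eq_one_of_ne_zero hx₀, chi_one, mul_neg_one,
        Finset.sum_neg_distrib]
  linarith

lemma sq_sum_chi (f : G → ZMod 2) :
    (∑ x, chi (f x)) ^ 2 = ∑ a, ∑ x, chi (f x + f (x + a)) := calc
  (∑ x, chi (f x)) ^ 2 = ∑ x, ∑ y, chi (f x) * chi (f y) := by
    rw [sq, Finset.sum_mul_sum]
  _ = ∑ x, ∑ a, chi (f x + f (x + a)) := by
    refine Finset.sum_congr rfl fun x _ => ?_
    rw [← Equiv.sum_comp (Equiv.addLeft x)]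
    simp only [Equiv.coe_addLeft, chi_add]
  _ = ∑ a, ∑ x, chi (f x + f (x + a)) := Finset.sum_comm

lemma SecondDerivsVanish.sum_chi_deriv_eq_zero {f : G → ZMod 2} (hf : SecondDerivsVanish f)
    {a x₀ : G} (hx₀ : f x₀ + f (x₀ + a) ≠ f 0 + f a) : ∑ x, chi (f x + f (x + a)) = 0 := by
  have hg := sum_chi_eq_zero_of_map_add (g := fun x => f x + f (x + a) + (f 0 + f a))
    (hf.deriv_add_const_map_add a) (x₀ := x₀) (by grind)
  calc ∑ x, chi (f x + f (x + a))
      = ∑ x, chi (f x + f (x + a) + (f 0 + f a)) * chi (f 0 + f a) := by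
        simp only [← chi_add, add_assoc, CharTwo.add_self_eq_zero, add_zero]
    _ = 0 := by rw [← Finset.sum_mul, hg, zero_mul]

end Sums

lemma sq_ne_two_pow_of_odd {n : ℕ} (hn : Odd n) (w : ℤ) : w ^ 2 ≠ 2 ^ n := by
  intro h
  have habs : w.natAbs ^ 2 = 2 ^ n := by zify; simpa [sq_abs] using h
  have := congrArg (· 2) (congrArg Nat.factorization habs)
  simp only [Nat.factorization_pow, Finsupp.smul_apply, smul_eq_mul,
    Nat.prime_two.factorization_self, mul_one] at this
  exact Nat.not_even_iff_odd.mpr hn ⟨_, this ▸ two_mul _⟩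

lemma SecondDerivsVanish.exists_deriv_eq_const {n : ℕ} (hn : Odd n) {f : V n → ZMod 2}
    (hf : SecondDerivsVanish f) : ∃ a ≠ 0, ∀ x, f x + f (x + a) = f 0 + f a := by
  by_contra! hne
  have hderiv_zero : ∑ x, chi (f x + f (x + 0)) = 2 ^ n := by
    simp [CharTwo.add_self_eq_zero, chi]
  refine sq_ne_two_pow_of_odd hn (∑ x, chi (f x)) ?_
  rw [sq_sum_chi, Fintype.sum_eq_single 0 fun a ha => ?_, hderiv_zero]
  obtain ⟨x₀, hx₀⟩ := hne a ha
  exact hf.sum_chi_deriv_eq_zero hx₀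

lemma PhiSpec.eq_of_dotp_deriv_eq_const {n : ℕ} {F Φ : V n → V n} {φ : V n → ZMod 2}
    (hspec : PhiSpec F Φ φ) {a u : V n} (ha : a ≠ 0) (hu : u ≠ 0) {c : ZMod 2}
    (hc : ∀ x, dotp u (F x + F (x + a)) = c) : Φ a = u := by
  obtain ⟨hΦa, hB⟩ := hspec.2.2 a ha
  refine (eq_of_hyperplane_subset (c := φ a) (d := c) hu hΦa fun y hy => ?_).symm
  obtain ⟨x, rfl⟩ : ∃ x, F x + F (x + a) = y := (Set.ext_iff.mp hB y).mpr hy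
  exact hc x

theorem stmt1_general {n : ℕ} (hn : Odd n) (F Φ : V n → V n) (φ : V n → ZMod 2)
    (hq : IsQuadratic F) (hspec : PhiSpec F Φ φ) :
    Function.Bijective Φ := by
  refine Finite.surjective_iff_bijective.mp fun u => ?_
  by_cases hu : u = 0
  · exact ⟨0, hu ▸ hspec.1⟩
  have hF : SecondDerivsVanish F := hq.1
  have hcomp : SecondDerivsVanish (fun x => dotp u (F x)) :=
    hF.comp_addMonoidHom (AddMonoidHom.mk' (dotp u) (dotp_add_right u))
  obtain ⟨a, ha, hconst⟩ := hcomp.exists_deriv_eq_const hn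
  exact ⟨a, hspec.eq_of_dotp_deriv_eq_const ha hu fun x => by rw [dotp_add_right]; exact hconst x⟩

theorem stmt1 {n : ℕ} (hn : Odd n) (F Φ : V n → V n) (φ : V n → ZMod 2)
    (hq : IsQuadratic F) (hAPN : IsAPN F) (hspec : PhiSpec F Φ φ) :
    Function.Bijective Φ :=
  stmt1_general hn F Φ φ hq hspec
end

section
/- Let F: 𝔽₂ⁿ → 𝔽₂ⁿ be a quadratic APN function with n even. Then for every nonzero v ∈ 𝔽₂ⁿ, the set A_v = {a ∈ 𝔽₂ⁿ : Φ_F(a) = v} ∪ {0} is a linear subspace of 𝔽₂ⁿ of even dimension. -/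
open Finset

/-!
Write `D(a, x) = F (x + a) + F x + F a + F 0`. Since `F` is quadratic, `D` is an alternating
`𝔽₂`-bilinear map, hence so is `B_v(a, x) = v · D(a, x)`. For `a ≠ 0` the values `D(a, x)` are the
sums of `F 0 + F a` with the elements of `B_a(F)`, so `B_v(a, ·) = 0` iff `v · _` is constant on the
hyperplane `B_a(F) = {y | Φ_F(a) · y = ε}`, i.e. iff `v = Φ_F(a)`. Thus `A_v` is the radical of
`B_v`. An alternating form splits off hyperbolic planes until it vanishes, so its radical has
dimension `≡ n (mod 2)`, which is even.
-/

open Module LinearMap Matrix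

section Hyperplane

variable {ι : Type*} [Fintype ι] [DecidableEq ι]

theorem exists_dotProduct_eq_one {u : ι → ZMod 2} (hu : u ≠ 0) : ∃ s, u ⬝ᵥ s = 1 := by
  obtain ⟨i, hi⟩ := Function.ne_iff.mp hu
  refine ⟨Pi.single i 1, ?_⟩
  have h01 : ∀ c : ZMod 2, c ≠ 0 → c = 1 := by decide
  rw [dotProduct_single, mul_one, h01 _ hi]

theorem exists_dotProduct_eq_zero_and_eq_one {u v : ι → ZMod 2} (hv : v ≠ 0) (huv : u ≠ v) :
    ∃ t, u ⬝ᵥ t = 0 ∧ v ⬝ᵥ t = 1 := by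
  obtain ⟨s, hs⟩ := exists_dotProduct_eq_one (sub_ne_zero.mpr huv)
  obtain ⟨q, hq⟩ := exists_dotProduct_eq_one hv
  rw [sub_dotProduct] at hs
  -- one of `s`, `q`, `q + s` separates `u` from `v`
  have key : ∀ a b c d : ZMod 2, a - b = 1 → c = 1 →
      (a = 0 ∧ b = 1) ∨ (d = 0 ∧ c = 1) ∨ (d + a = 0 ∧ c + b = 1) := by decide
  rcases key _ _ _ (u ⬝ᵥ q) hs hq with h | h | h
  · exact ⟨s, h⟩
  · exact ⟨q, h⟩
  · exact ⟨q + s, by simpa [dotProduct_add] using h⟩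

theorem forall_dotProduct_eq_of_dotProduct_eq_iff {u v y₀ : ι → ZMod 2} (hv : v ≠ 0) :
    (∀ y, u ⬝ᵥ y = u ⬝ᵥ y₀ → v ⬝ᵥ y = v ⬝ᵥ y₀) ↔ u = v := by
  refine ⟨fun h => ?_, fun huv y hy => huv ▸ hy⟩
  by_contra huv
  obtain ⟨t, hut, hvt⟩ := exists_dotProduct_eq_zero_and_eq_one hv huv
  have := h (y₀ + t) (by rw [dotProduct_add, hut, add_zero])
  rw [dotProduct_add, hvt, add_eq_left] at this
  exact one_ne_zero this

end Hyperplane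

namespace LinearMap.IsAlt

variable {K W : Type*} [Field K] [AddCommGroup W] [Module K W] {B : W →ₗ[K] W →ₗ[K] K}

theorem mem_ker_iff_of_apply_eq_one (hB : B.IsAlt) {x y : W} (hxy : B x y = 1) {z : W} :
    z ∈ ker B ↔ z ∈ ker (B x) ⊓ ker (B y) ∧ ∀ u ∈ ker (B x) ⊓ ker (B y), B z u = 0 := by
  have hyx : B y x = -1 := by rw [← hB.neg, hxy]
  simp only [Submodule.mem_inf, mem_ker]
  constructor
  · intro hz
    exact ⟨⟨hB.eq_iff.mp (by simp [hz]), hB.eq_iff.mp (by simp [hz])⟩, by simp [hz]⟩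
  · rintro ⟨⟨hxz, hyz⟩, hzU⟩
    ext w
    -- `w + B y w • x - B x w • y` is the component of `w` in `ker (B x) ⊓ ker (B y)`.
    have hproj := hzU (w + B y w • x - B x w • y) (by simp [hB.self_eq_zero, hxy, hyx])
    have hzx : B z x = 0 := hB.eq_iff.mp hxz
    have hzy : B z y = 0 := hB.eq_iff.mp hyz
    simpa [hzx, hzy] using hproj

theorem map_subtype_ker_domRestrict₁₂ (hB : B.IsAlt) {x y : W} (hxy : B x y = 1) :
    (ker (B.domRestrict₁₂ (ker (B x) ⊓ ker (B y)) (ker (B x) ⊓ ker (B y)))).map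
      (ker (B x) ⊓ ker (B y)).subtype = ker B := by
  ext z
  rw [mem_ker_iff_of_apply_eq_one hB hxy]
  simp only [Submodule.mem_map, mem_ker, Submodule.coe_subtype, LinearMap.ext_iff,
    domRestrict₁₂_apply, zero_apply, Subtype.forall]
  constructor
  · rintro ⟨u, hu, rfl⟩
    exact ⟨u.2, hu⟩
  · rintro ⟨hzU, hz⟩
    exact ⟨⟨z, hzU⟩, hz, rfl⟩

theorem finrank_inf_ker_add_two [FiniteDimensional K W] (hB : B.IsAlt) {x y : W}
    (hxy : B x y = 1) : finrank K ↥(ker (B x) ⊓ ker (B y)) + 2 = finrank K W := by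
  have hyx : B y x = -1 := by rw [← hB.neg, hxy]
  have hsurj : Function.Surjective ((B x).prod (B y)) := by
    rintro ⟨a, b⟩
    refine ⟨a • y - b • x, ?_⟩
    simp [hB.self_eq_zero, hxy, hyx]
  have h := finrank_range_add_finrank_ker ((B x).prod (B y))
  rw [range_eq_top.mpr hsurj, finrank_top, finrank_prod, finrank_self, ker_prod] at h
  omega

theorem exists_apply_eq_one (hB : B ≠ 0) : ∃ x y, B x y = 1 := by
  obtain ⟨x, y, hxy⟩ : ∃ x y, B x y ≠ 0 := by
    by_contra! h
    exact hB (ext₂ h)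
  exact ⟨x, (B x y)⁻¹ • y, by rw [map_smul, smul_eq_mul, inv_mul_cancel₀ hxy]⟩

theorem even_finrank_add_finrank_ker [FiniteDimensional K W] (hB : B.IsAlt) :
    Even (finrank K W + finrank K (ker B)) := by
  induction h : finrank K W using Nat.strong_induction_on generalizing W with
  | _ N ih =>
    by_cases hB0 : B = 0
    · rw [hB0, ker_zero, finrank_top, h]
      exact ⟨N, rfl⟩
    obtain ⟨x, y, hxy⟩ := exists_apply_eq_one hB0
    set U := ker (B x) ⊓ ker (B y)
    have hU : finrank K U + 2 = N := h ▸ finrank_inf_ker_add_two hB hxy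
    have hker : finrank K (ker B) = finrank K (ker (B.domRestrict₁₂ U U)) := by
      rw [← map_subtype_ker_domRestrict₁₂ hB hxy, Submodule.finrank_map_subtype_eq]
    obtain ⟨k, hk⟩ := ih (finrank K U) (by omega) (B := B.domRestrict₁₂ U U) (fun u => hB u) rfl
    exact ⟨k + 1, by omega⟩

end LinearMap.IsAlt

section SecondDiff

variable {M N : Type*} [AddCommGroup M] [AddCommGroup N]

def HasDegreeAtMostTwo (F : M → N) : Prop :=
  ∀ x y a : M, F (x + y + a) + F (x + y) + F (x + a) + F x
    + F (y + a) + F y + F a + F 0 = 0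

def secondDiff (F : M → N) (a x : M) : N := F (x + a) + F x + F a + F 0

variable {F : M → N}

theorem secondDiff_comm (a x : M) : secondDiff F a x = secondDiff F x a := by
  rw [secondDiff, secondDiff, add_comm x a]
  abel

theorem secondDiff_self [Module (ZMod 2) M] [Module (ZMod 2) N] (a : M) :
    secondDiff F a a = 0 := by
  rw [secondDiff, ZModModule.add_self a,
    show F 0 + F a + F a + F 0 = (F a + F a) + (F 0 + F 0) by abel,
    ZModModule.add_self, ZModModule.add_self, add_zero]

variable [Module (ZMod 2) N]

theorem HasDegreeAtMostTwo.secondDiff_add_right (hF : HasDegreeAtMostTwo F) (a x y : M) :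
    secondDiff F a (x + y) = secondDiff F a x + secondDiff F a y := by
  rw [← sub_eq_zero, ZModModule.sub_eq_add]
  calc secondDiff F a (x + y) + (secondDiff F a x + secondDiff F a y)
      = (F (x + y + a) + F (x + y) + F (x + a) + F x + F (y + a) + F y + F a + F 0)
        + ((F a + F 0) + (F a + F 0)) := by unfold secondDiff; abel
    _ = 0 := by rw [hF, ZModModule.add_self, add_zero]

theorem HasDegreeAtMostTwo.secondDiff_add_left (hF : HasDegreeAtMostTwo F) (a b x : M) :
    secondDiff F (a + b) x = secondDiff F a x + secondDiff F b x := by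
  simp only [secondDiff_comm _ x, hF.secondDiff_add_right]

variable [Module (ZMod 2) M]

def HasDegreeAtMostTwo.secondDiffForm (hF : HasDegreeAtMostTwo F) :
    M →ₗ[ZMod 2] M →ₗ[ZMod 2] N :=
  LinearMap.mk₂ (ZMod 2) (secondDiff F) hF.secondDiff_add_left
    (fun c a x => ZMod.map_smul
      (AddMonoidHom.mk' (secondDiff F · x) (hF.secondDiff_add_left · · x)) c a)
    hF.secondDiff_add_right
    (fun c a x => ZMod.map_smul
      (AddMonoidHom.mk' (secondDiff F a) (hF.secondDiff_add_right a)) c x)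

theorem HasDegreeAtMostTwo.secondDiffForm_apply (hF : HasDegreeAtMostTwo F) (a x : M) :
    hF.secondDiffForm a x = secondDiff F a x := rfl

theorem HasDegreeAtMostTwo.isAlt_compr₂_secondDiffForm (hF : HasDegreeAtMostTwo F)
    (ℓ : N →ₗ[ZMod 2] ZMod 2) : (hF.secondDiffForm.compr₂ ℓ).IsAlt := fun a => by
  rw [compr₂_apply, hF.secondDiffForm_apply, secondDiff_self, map_zero]

end SecondDiff

theorem forall_dotProduct_secondDiff_eq_zero_iff {ι M : Type*} [Fintype ι] [DecidableEq ι]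
    [AddCommGroup M] {F : M → ι → ZMod 2} {a : M} {u v : ι → ZMod 2} {c : ZMod 2}
    (hF : {y | ∃ x, F x + F (x + a) = y} = {y | u ⬝ᵥ y = c}) (hv : v ≠ 0) :
    (∀ x, v ⬝ᵥ secondDiff F a x = 0) ↔ u = v := by
  have hmem (y) : u ⬝ᵥ y = c ↔ ∃ x, F x + F (x + a) = y := (Set.ext_iff.mp hF y).symm
  have hy₀ : u ⬝ᵥ (F 0 + F a) = c := (hmem _).mpr ⟨0, by rw [zero_add]⟩
  have hsplit (x) : v ⬝ᵥ secondDiff F a x = 0 ↔ v ⬝ᵥ (F x + F (x + a)) = v ⬝ᵥ (F 0 + F a) := by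
    rw [secondDiff, show F (x + a) + F x + F a + F 0 = (F x + F (x + a)) + (F 0 + F a) by abel,
      dotProduct_add, CharTwo.add_eq_zero]
  rw [← forall_dotProduct_eq_of_dotProduct_eq_iff (y₀ := F 0 + F a) hv, hy₀]
  simp only [hsplit, hmem, forall_exists_index, forall_apply_eq_imp_iff]

theorem stmt2_general {n : ℕ} (hn : Even n) (F Φ : V n → V n) (φ : V n → ZMod 2)
    (hq : IsQuadratic F) (hspec : PhiSpec F Φ φ)
    (v : V n) (hv : v ≠ 0) :
    ∃ S : Submodule (ZMod 2) (V n),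
      (S : Set (V n)) = {a : V n | Φ a = v} ∪ {0} ∧
      Even (Module.finrank (ZMod 2) S) := by
  have hF : HasDegreeAtMostTwo F := hq.1
  obtain ⟨-, -, hhyperplane⟩ := hspec
  let B := hF.secondDiffForm.compr₂ (dotProductBilin (ZMod 2) (ZMod 2) v)
  refine ⟨ker B, ?_, ?_⟩
  · ext a
    by_cases ha : a = 0
    · simp [ha]
    have hker : a ∈ ker B ↔ ∀ x, v ⬝ᵥ secondDiff F a x = 0 := by
      simp [B, LinearMap.ext_iff, hF.secondDiffForm_apply]
    simpa [ha, hker, eq_comm] using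
      forall_dotProduct_secondDiff_eq_zero_iff (hhyperplane a ha).2 hv
  · have hB : B.IsAlt := hF.isAlt_compr₂_secondDiffForm _
    have h := hB.even_finrank_add_finrank_ker
    rw [finrank_fin_fun] at h
    exact (Nat.even_add.mp h).mp hn

theorem stmt2 {n : ℕ} (hn : Even n) (F Φ : V n → V n) (φ : V n → ZMod 2)
    (hq : IsQuadratic F) (hAPN : IsAPN F) (hspec : PhiSpec F Φ φ)
    (v : V n) (hv : v ≠ 0) :
    ∃ S : Submodule (ZMod 2) (V n),
      (S : Set (V n)) = {a : V n | Φ a = v} ∪ {0} ∧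
      Even (Module.finrank (ZMod 2) S) :=
  stmt2_general hn F Φ φ hq hspec v hv
end

section
/- Let F: 𝔽₂ⁿ → 𝔽₂ⁿ be a quadratic APN function. Then the number of distinct nonzero values taken by Φ_F is odd. -/
open Finset

/-!
If `Φ a = Φ b` with `a ≠ b`, then every derivative value `F x + F (x + a + b)` is the sum of a
value of the `b`-derivative and one of the `a`-derivative, so the hyperplane `B_{a+b}(F)` lies in a
hyperplane with normal `Φ a`; hence `Φ (a + b) = Φ a`. Thus each fiber of a nonzero value of `Φ`,
together with `0`, is a nontrivial subgroup of `𝔽₂ⁿ`, whose order is a power of `2` at least `2`,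
and the fiber itself has odd size. The `2ⁿ - 1` nonzero vectors are partitioned into these odd
fibers, so the number of fibers is odd.
-/

open Matrix

lemma exists_eq_smul_of_ker_dotProduct_le {K : Type*} [Field K] {ι : Type*} [Fintype ι]
    [DecidableEq ι] {w v : ι → K} (hw : w ≠ 0) (h : ∀ t, w ⬝ᵥ t = 0 → v ⬝ᵥ t = 0) :
    ∃ r : K, v = r • w := by
  obtain ⟨j, hj⟩ := Function.ne_iff.mp hw
  refine ⟨v j / w j, funext fun i => ?_⟩
  have hkill : w ⬝ᵥ (Pi.single i (w j) - Pi.single j (w i)) = 0 := by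
    simp only [dotProduct_sub, dotProduct_single, mul_comm, sub_self]
  have := h _ hkill
  simp only [dotProduct_sub, dotProduct_single, sub_eq_zero] at this
  rw [Pi.smul_apply, smul_eq_mul, div_mul_eq_mul_div, eq_div_iff hj, this]

lemma exists_eq_smul_of_affine_hyperplane_subset {K : Type*} [Field K] {ι : Type*} [Fintype ι]
    [DecidableEq ι] {w v : ι → K} {c d : K} (hw : w ≠ 0)
    (h : ∀ y, w ⬝ᵥ y = c → v ⬝ᵥ y = d) : ∃ r : K, v = r • w := by
  obtain ⟨j, hj⟩ := Function.ne_iff.mp hw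
  have hy₀ : w ⬝ᵥ Pi.single j (c / w j) = c := by
    rw [dotProduct_single, mul_div_cancel₀ _ hj]
  refine exists_eq_smul_of_ker_dotProduct_le hw fun t ht => ?_
  have hshift := h (Pi.single j (c / w j) + t) (by rw [dotProduct_add, hy₀, ht, add_zero])
  rwa [dotProduct_add, h _ hy₀, add_eq_left] at hshift

lemma AddSubgroup.even_card_of_ne_bot {G : Type*} [AddGroup G] {k : ℕ} (hG : Nat.card G = 2 ^ k)
    {H : AddSubgroup G} (hH : H ≠ ⊥) : Even (Nat.card H) := by
  obtain ⟨m, -, hm⟩ := (Nat.dvd_prime_pow Nat.prime_two).mp (hG ▸ H.card_addSubgroup_dvd_card)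
  have hm₀ : m ≠ 0 := by
    rintro rfl
    exact hH (AddSubgroup.card_eq_one.mp hm)
  rw [hm]
  exact Nat.even_pow.mpr ⟨even_two, hm₀⟩

lemma Finset.odd_card_image_iff {ι M : Type*} [DecidableEq M] {s : Finset ι} {f : ι → M}
    (h : ∀ i ∈ s, Odd #{j ∈ s | f j = f i}) : Odd #(s.image f) ↔ Odd #s := by
  rw [card_eq_sum_card_image f s, odd_sum_iff_odd_card_odd, filter_true_of_mem]
  rintro _ hy
  obtain ⟨i, hi, rfl⟩ := mem_image.mp hy
  exact h i hi

lemma IsQuadratic.dim_pos {n : ℕ} {F : V n → V n} (hq : IsQuadratic F) : 0 < n := by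
  refine Nat.pos_of_ne_zero ?_
  rintro rfl
  obtain ⟨x, a, h⟩ := hq.2
  exact h (Subsingleton.elim _ _)

namespace PhiSpec

variable {n : ℕ} {F Φ : V n → V n} {φ : V n → ZMod 2}

lemma map_eq_zero_iff (hspec : PhiSpec F Φ φ) {a : V n} : Φ a = 0 ↔ a = 0 :=
  ⟨fun h => by_contra fun ha => (hspec.2.2 a ha).1 h, fun h => h ▸ hspec.1⟩

lemma dotp_derivative (hspec : PhiSpec F Φ φ) {a : V n} (ha : a ≠ 0) (x : V n) :
    dotp (Φ a) (F x + F (x + a)) = φ a := by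
  have hx : F x + F (x + a) ∈ {y : V n | ∃ x, F x + F (x + a) = y} := ⟨x, rfl⟩
  rwa [(hspec.2.2 a ha).2] at hx

lemma exists_derivative_eq (hspec : PhiSpec F Φ φ) {a y : V n} (ha : a ≠ 0)
    (hy : dotp (Φ a) y = φ a) : ∃ x, F x + F (x + a) = y := by
  have hy' : y ∈ {y : V n | dotp (Φ a) y = φ a} := hy
  rwa [← (hspec.2.2 a ha).2] at hy'

lemma map_add_of_map_eq (hspec : PhiSpec F Φ φ) {a b : V n} (hab : a ≠ b) (h : Φ a = Φ b) :
    Φ (a + b) = Φ a := by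
  have ha : a ≠ 0 := by
    rintro rfl
    exact hab (hspec.map_eq_zero_iff.mp (h ▸ hspec.1)).symm
  have hb : b ≠ 0 := by
    rintro rfl
    exact ha (hspec.map_eq_zero_iff.mp (h.trans hspec.1))
  have hab₀ : a + b ≠ 0 := by rwa [Ne, ← ZModModule.sub_eq_add, sub_eq_zero]
  obtain ⟨r, hr⟩ := exists_eq_smul_of_affine_hyperplane_subset (c := φ (a + b)) (d := φ b + φ a)
    (hspec.2.2 _ hab₀).1 fun y hy => by
      obtain ⟨x, rfl⟩ := hspec.exists_derivative_eq hab₀ hy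
      have hsplit : F x + F (x + (a + b)) = (F x + F (x + b)) + (F (x + b) + F (x + b + a)) := by
        rw [ZModModule.add_add_add_cancel, add_assoc x b a, add_comm b a]
      rw [hsplit, dotProduct_add]
      exact congrArg₂ (· + ·) (h ▸ hspec.dotp_derivative hb x) (hspec.dotp_derivative ha (x + b))
  have hr₁ : r = 1 := by
    have hr₀ : r ≠ 0 := by
      rintro rfl
      exact (hspec.2.2 a ha).1 (by rw [hr, zero_smul])
    have hZMod2 : ∀ s : ZMod 2, s ≠ 0 → s = 1 := by decide
    exact hZMod2 r hr₀
  rw [hr, hr₁, one_smul]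

def fiberAddSubgroup (hspec : PhiSpec F Φ φ) (v : V n) : AddSubgroup (V n) where
  carrier := {a | a = 0 ∨ Φ a = v}
  zero_mem' := Or.inl rfl
  add_mem' := by
    rintro a b (rfl | ha) (rfl | hb)
    · exact Or.inl (add_zero 0)
    · exact Or.inr ((zero_add b).symm ▸ hb)
    · exact Or.inr ((add_zero a).symm ▸ ha)
    · by_cases hab : a = b
      · exact Or.inl (hab ▸ ZModModule.add_self a)
      · exact Or.inr ((hspec.map_add_of_map_eq hab (ha.trans hb.symm)).trans ha)
  neg_mem' := by
    intro a ha
    rwa [ZModModule.neg_eq_self]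

lemma card_fiberAddSubgroup (hspec : PhiSpec F Φ φ) (v : V n) :
    Nat.card (hspec.fiberAddSubgroup v) = #{a | a ≠ 0 ∧ Φ a = v} + 1 := by
  have hcoe : (hspec.fiberAddSubgroup v : Set (V n)) =
      ↑(insert 0 ({a | a ≠ 0 ∧ Φ a = v} : Finset (V n))) := by
    ext a
    rw [coe_insert, Set.mem_insert_iff, mem_coe, mem_filter_univ]
    change a = 0 ∨ Φ a = v ↔ _
    tauto
  have h₀ : (0 : V n) ∉ ({a | a ≠ 0 ∧ Φ a = v} : Finset (V n)) := by simp
  rw [← SetLike.coe_sort_coe, Nat.card_coe_set_eq, hcoe, Set.ncard_coe_finset,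
    card_insert_of_notMem h₀]

lemma odd_card_fiber (hspec : PhiSpec F Φ φ) {a : V n} (ha : a ≠ 0) :
    Odd #{b | b ≠ 0 ∧ Φ b = Φ a} := by
  have hne : hspec.fiberAddSubgroup (Φ a) ≠ ⊥ := fun h =>
    ha ((AddSubgroup.mem_bot).mp (h ▸ Or.inr rfl : a ∈ (⊥ : AddSubgroup (V n))))
  have heven := AddSubgroup.even_card_of_ne_bot (k := n) (by simp) hne
  rw [hspec.card_fiberAddSubgroup, Nat.even_add_one] at heven
  exact Nat.not_even_iff_odd.mp heven

end PhiSpec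

theorem stmt3_general {n : ℕ} (F Φ : V n → V n) (φ : V n → ZMod 2)
    (hq : IsQuadratic F) (hspec : PhiSpec F Φ φ) :
    Odd (Set.ncard {v : V n | v ≠ 0 ∧ ∃ a, Φ a = v}) := by
  have himage : {v : V n | v ≠ 0 ∧ ∃ a, Φ a = v} = ↑((univ.filter (· ≠ (0 : V n))).image Φ) := by
    ext v
    simp only [Set.mem_ofPred_eq, coe_image, coe_filter, mem_univ, true_and, Set.mem_image]
    constructor
    · rintro ⟨hv, a, rfl⟩
      exact ⟨a, fun ha => hv (hspec.map_eq_zero_iff.mpr ha), rfl⟩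
    · rintro ⟨a, ha, rfl⟩
      exact ⟨fun h => ha (hspec.map_eq_zero_iff.mp h), a, rfl⟩
  rw [himage, Set.ncard_coe_finset, odd_card_image_iff]
  · have hcard : #(univ.filter (· ≠ (0 : V n))) = 2 ^ n - 1 := by
      simp [filter_ne', card_univ]
    rw [hcard]
    exact Nat.Even.sub_odd Nat.one_le_two_pow (Nat.even_pow.mpr ⟨even_two, hq.dim_pos.ne'⟩) odd_one
  · intro a ha
    rw [filter_filter]
    exact hspec.odd_card_fiber (mem_filter.mp ha).2

theorem stmt3 {n : ℕ} (F Φ : V n → V n) (φ : V n → ZMod 2)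
    (hq : IsQuadratic F) (hAPN : IsAPN F) (hspec : PhiSpec F Φ φ) :
    Odd (Set.ncard {v : V n | v ≠ 0 ∧ ∃ a, Φ a = v}) :=
  stmt3_general F Φ φ hq hspec
end

section
/- Let Φ: 𝔽₂ⁿ → 𝔽₂ⁿ be any function such that deg(L·Φ) < n for every linear function L: 𝔽₂ⁿ → 𝔽₂ⁿ (where (L·Φ)(x) = L(x)·Φ(x) is a Boolean function). Then each coordinate function Φ_i of Φ has the form Φ_i(x) = f_i(x) + λ_i·Σ(all monomials of degree n−1 and n), with deg(f_i) ≤ n−2 and λ_i ∈ 𝔽₂. -/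
open Finset

/- A map `Φ` with `deg (L·Φ) < n` for every linear `L` has, in each coordinate `Φ_i`, vanishing top
ANF coefficient of `x_k Φ_i(x)`, i.e. `∑ₓ x_k Φ_i(x) = 0`, by taking `L x = x_k e_i`. The ANF
coefficient of `Φ_i` at the monomial missing `x_k` is `∑_{x_k = 0} Φ_i = ∑ Φ_i + ∑ x_k Φ_i`, so it
equals the top coefficient `λ_i`. Hence all coefficients of degree `≥ n - 1` equal `λ_i`, and adding
`λ_i` times the sum of those monomials kills them. -/

section BooleanFunction

variable {n : ℕ}

lemma anfCoeff_add (f g : V n → ZMod 2) (a : V n) :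
    anfCoeff (fun x => f x + g x) a = anfCoeff f a + anfCoeff g a :=
  sum_add_distrib

lemma anfCoeff_const_mul (c : ZMod 2) (f : V n → ZMod 2) (a : V n) :
    anfCoeff (fun x => c * f x) a = c * anfCoeff f a :=
  (mul_sum _ _ _).symm

lemma anfCoeff_sum {ι : Type*} (s : Finset ι) (f : ι → V n → ZMod 2) (a : V n) :
    anfCoeff (fun x => ∑ b ∈ s, f b x) a = ∑ b ∈ s, anfCoeff (f b) a :=
  sum_comm

lemma anfCoeff_one (f : V n → ZMod 2) : anfCoeff f 1 = ∑ x, f x := by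
  simp [anfCoeff]

/- The sum defining `anfCoeff (mono b) a` factors over the coordinates; the factor at `i` is
`1` if `a i = b i` and `0` otherwise. -/
lemma anfCoeff_mono (b a : V n) : anfCoeff (mono b) a = if a = b then 1 else 0 := by
  let c : ZMod 2 → ZMod 2 → ZMod 2 → ZMod 2 := fun a b t =>
    (if t = 1 → a = 1 then 1 else 0) * (if b = 1 then t else 1)
  have hterm : ∀ x : V n, (if ∀ i, x i = 1 → a i = 1 then mono b x else 0)
      = ∏ i, c (a i) (b i) (x i) := by
    intro x
    simp only [c, prod_mul_distrib, prod_boole, mem_univ, true_implies, mono, prod_filter]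
    split_ifs <;> simp
  have hfactor : ∀ a b : ZMod 2, ∑ t, c a b t = if a = b then 1 else 0 := by decide
  calc anfCoeff (mono b) a = ∑ x : V n, ∏ i, c (a i) (b i) (x i) := by
        rw [anfCoeff, sum_filter]; exact sum_congr rfl fun x _ => hterm x
    _ = ∏ i, if a i = b i then 1 else 0 := by
        rw [← Fintype.prod_sum]; exact prod_congr rfl fun i _ => hfactor (a i) (b i)
    _ = if a = b then 1 else 0 := by simp [prod_boole, funext_iff]

lemma anfCoeff_sum_mono (s : Finset (V n)) (a : V n) :
    anfCoeff (fun x => ∑ b ∈ s, mono b x) a = if a ∈ s then 1 else 0 := by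
  simp [anfCoeff_sum, anfCoeff_mono]

lemma anfCoeff_update_one_zero (f : V n → ZMod 2) (k : Fin n) :
    anfCoeff f (Function.update 1 k 0) = anfCoeff f 1 + ∑ x, x k * f x := by
  have hterm : ∀ x : V n, (if ∀ j, x j = 1 → Function.update (1 : V n) k 0 j = 1
      then f x else 0) = f x + x k * f x := by
    intro x
    have hsupp : (∀ j, x j = 1 → Function.update (1 : V n) k 0 j = 1) ↔ x k ≠ 1 := by
      refine ⟨fun hx hk => by simpa using hx k hk, fun hk j hj => ?_⟩
      rw [Function.update_of_ne (by rintro rfl; exact hk hj), Pi.one_apply]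
    rw [if_congr hsupp rfl rfl]
    rcases (by decide : ∀ t : ZMod 2, t = 0 ∨ t = 1) (x k) with h | h <;>
      simp [h, CharTwo.add_self_eq_zero]
  rw [anfCoeff, sum_filter, anfCoeff_one, ← sum_add_distrib]
  exact sum_congr rfl fun x _ => hterm x

lemma wt_one : wt (1 : V n) = n := by
  simp [wt]

lemma eq_one_or_exists_eq_update_one_zero {a : V n} (ha : n - 1 ≤ wt a) :
    a = 1 ∨ ∃ k, a = Function.update (1 : V n) k 0 := by
  by_cases h1 : a = 1
  · exact Or.inl h1
  obtain ⟨k, hk⟩ : ∃ k, a k ≠ 1 := by simpa [funext_iff] using h1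
  have hsupp : univ.filter (fun j => a j = 1) = univ.erase k := by
    refine eq_of_subset_of_card_le (fun j hj => mem_erase.2 ⟨?_, mem_univ j⟩) ?_
    · rintro rfl; exact hk (mem_filter.1 hj).2
    · rwa [card_erase_of_mem (mem_univ k), card_univ, Fintype.card_fin]
  refine Or.inr ⟨k, funext fun j => ?_⟩
  by_cases hj : j = k
  · subst hj
    rw [Function.update_self]
    exact (by decide : ∀ t : ZMod 2, t ≠ 1 → t = 0) _ hk
  · rw [Function.update_of_ne hj, Pi.one_apply]
    simpa using (Finset.ext_iff.1 hsupp j).2 (mem_erase.2 ⟨hj, mem_univ j⟩)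

lemma degB_le_iff {f : V n → ZMod 2} {d : ℕ} :
    degB f ≤ d ↔ ∀ a, d < wt a → anfCoeff f a = 0 := by
  simp only [degB, Finset.sup_le_iff, mem_filter, mem_univ, true_and]
  exact forall_congr' fun a => by rw [← not_lt, not_imp_not]

lemma sum_eq_zero_of_degB_lt {f : V n → ZMod 2} (h : degB f < n) : ∑ x, f x = 0 := by
  rw [← anfCoeff_one]
  exact degB_le_iff.1 le_rfl 1 (by rwa [wt_one])

variable {Φ : V n → V n}

lemma sum_coord_mul_eq_zero
    (h : ∀ L : V n →ₗ[ZMod 2] V n, degB (fun x => dotp (L x) (Φ x)) < n) (i k : Fin n) :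
    ∑ x : V n, x k * Φ x i = 0 := by
  have := sum_eq_zero_of_degB_lt (h (LinearMap.single (ZMod 2) _ i ∘ₗ LinearMap.proj k))
  simpa [dotp, Pi.single_apply, ite_mul] using this

lemma anfCoeff_coord_eq_of_le_wt
    (h : ∀ L : V n →ₗ[ZMod 2] V n, degB (fun x => dotp (L x) (Φ x)) < n) (i : Fin n)
    {a : V n} (ha : n - 1 ≤ wt a) :
    anfCoeff (fun x => Φ x i) a = anfCoeff (fun x => Φ x i) 1 := by
  obtain rfl | ⟨k, rfl⟩ := eq_one_or_exists_eq_update_one_zero ha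
  · rfl
  · rw [anfCoeff_update_one_zero, sum_coord_mul_eq_zero h, add_zero]

end BooleanFunction

theorem stmt10 {n : ℕ} (Φ : V n → V n)
    (h : ∀ L : V n →ₗ[ZMod 2] V n, degB (fun x => dotp (L x) (Φ x)) < n) :
    ∀ i : Fin n, ∃ (f : V n → ZMod 2) (lam : ZMod 2),
      degB f ≤ n - 2 ∧
      ∀ x : V n, Φ x i =
        f x + lam * ∑ a ∈ Finset.univ.filter (fun a : V n => n - 1 ≤ wt a), mono a x := by
  intro i
  set lam := anfCoeff (fun x => Φ x i) 1
  set T := Finset.univ.filter (fun a : V n => n - 1 ≤ wt a)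
  refine ⟨fun x => Φ x i + lam * ∑ a ∈ T, mono a x, lam, degB_le_iff.2 fun a ha => ?_, fun x => ?_⟩
  · have haT : n - 1 ≤ wt a := by omega
    rw [anfCoeff_add, anfCoeff_const_mul, anfCoeff_sum_mono, if_pos (by simpa [T] using haT),
      anfCoeff_coord_eq_of_le_wt h i haT, mul_one, CharTwo.add_self_eq_zero]
  · rw [add_assoc, CharTwo.add_self_eq_zero, add_zero]
end

section
/- For a Boolean function f: 𝔽₂ⁿ → 𝔽₂ with algebraic normal form coefficients g_f(a) (a ∈ 𝔽₂ⁿ), and for any a with wt(a) ≥ 1, the coefficient satisfies g_f(a) ≡ 2^{wt(a)−1} − 2^{wt(a)−n−1} Σ_{b ⪯ (a+𝟏)} W_f(b) (mod 2), where the sum is over all b ∈ 𝔽₂ⁿ with b_i ≤ (a+𝟏)_i for all i. -/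
open Finset

/-!
Summing `W_f(b) = Σ_x (-1)^(f x + b·x)` over `b ⪯ a + 𝟏`, the characters `b ↦ (-1)^(b·x)` cancel
unless `x` vanishes outside the support of `a`, so the sum is `2^(n - wt a) Σ_{x ⪯ a} (-1)^(f x)
= 2^(n - wt a) (2^(wt a) - 2N)` with `N = #{x ⪯ a | f x = 1}`. Hence the rational expression of
the theorem is exactly the integer `N`, while Möbius inversion gives `g_f(a) = Σ_{x ⪯ a} f x ≡ N`.
-/

lemma neg_one_pow_val_add (u v : ZMod 2) :
    (-1 : ℤ) ^ (u + v).val = (-1) ^ u.val * (-1) ^ v.val := by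
  revert u v; decide

lemma neg_one_pow_val_sum {α : Type*} (s : Finset α) (g : α → ZMod 2) :
    (-1 : ℤ) ^ (∑ i ∈ s, g i).val = ∏ i ∈ s, (-1) ^ (g i).val := by
  induction s using Finset.cons_induction with
  | empty => simp
  | cons i s hi ih => rw [sum_cons, prod_cons, neg_one_pow_val_add, ih]

lemma neg_one_pow_val (u : ZMod 2) : (-1 : ℤ) ^ u.val = 1 - 2 * u.val := by
  revert u; decide

lemma sum_neg_one_pow_val {α : Type*} (s : Finset α) (g : α → ZMod 2) :
    ∑ x ∈ s, (-1 : ℤ) ^ (g x).val = #s - 2 * ∑ x ∈ s, ((g x).val : ℤ) := by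
  simp only [neg_one_pow_val, sum_sub_distrib, sum_const, nsmul_one, mul_sum]

lemma sum_piFinset_neg_one_pow_dotp {n : ℕ} (s : Fin n → Finset (ZMod 2)) (x : V n) :
    ∑ b ∈ Fintype.piFinset s, (-1 : ℤ) ^ (dotp b x).val
      = ∏ i, ∑ c ∈ s i, (-1) ^ (c * x i).val := by
  simp only [prod_univ_sum, dotp, neg_one_pow_val_sum]

section Subcube

variable {n : ℕ}

/-- `{x | x ⪯ a}`. -/
def subcube (a : V n) : Finset (V n) :=
  Fintype.piFinset fun i => if a i = 1 then univ else {0}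

/-- `{b | b ⪯ a + 𝟏}`. -/
def cosubcube (a : V n) : Finset (V n) :=
  Fintype.piFinset fun i => if a i = 1 then {0} else univ

lemma filter_le_eq_subcube (a : V n) :
    univ.filter (fun x : V n => ∀ i, x i = 1 → a i = 1) = subcube a := by
  have coord : ∀ ξ α : ZMod 2, (ξ = 1 → α = 1) ↔ ξ ∈ if α = 1 then univ else {0} := by
    decide
  ext x
  simp only [subcube, mem_filter, mem_univ, true_and, Fintype.mem_piFinset, coord]

lemma filter_le_add_one_eq_cosubcube (a : V n) :
    univ.filter (fun b : V n => ∀ i, b i = 1 → a i = 0) = cosubcube a := by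
  have coord : ∀ β α : ZMod 2, (β = 1 → α = 0) ↔ β ∈ if α = 1 then {0} else univ := by
    decide
  ext b
  simp only [cosubcube, mem_filter, mem_univ, true_and, Fintype.mem_piFinset, coord]

lemma card_subcube (a : V n) : #(subcube a) = 2 ^ wt a := by
  simp only [subcube, Fintype.card_piFinset, apply_ite card, card_univ, ZMod.card,
    card_singleton, prod_ite, prod_const, one_pow, mul_one, wt]

lemma card_subcube_mul_card_cosubcube (a : V n) :
    #(subcube a) * #(cosubcube a) = 2 ^ n := by
  have coord : ∀ α : ZMod 2,
      #(if α = 1 then univ else ({0} : Finset (ZMod 2)))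
        * #(if α = 1 then ({0} : Finset (ZMod 2)) else univ) = 2 := by
    decide
  rw [subcube, cosubcube, Fintype.card_piFinset, Fintype.card_piFinset, ← prod_mul_distrib]
  simp only [coord, prod_const, card_univ, Fintype.card_fin]

lemma sum_cosubcube_neg_one_pow_dotp (a x : V n) :
    ∑ b ∈ cosubcube a, (-1 : ℤ) ^ (dotp b x).val
      = if x ∈ subcube a then (#(cosubcube a) : ℤ) else 0 := by
  have coord : ∀ α ξ : ZMod 2,
      ∑ c ∈ (if α = 1 then {0} else univ), (-1 : ℤ) ^ (c * ξ).val
        = if ξ ∈ (if α = 1 then univ else {0}) then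
            ((#(if α = 1 then {0} else (univ : Finset (ZMod 2))) : ℕ) : ℤ) else 0 := by
    decide
  rw [cosubcube, sum_piFinset_neg_one_pow_dotp]
  simp only [coord, Fintype.prod_ite_zero, subcube, Fintype.mem_piFinset,
    Fintype.card_piFinset, Nat.cast_prod]
  congr

lemma sum_cosubcube_walsh (f : V n → ZMod 2) (a : V n) :
    ∑ b ∈ cosubcube a, walsh f b
      = #(cosubcube a) * ∑ x ∈ subcube a, (-1 : ℤ) ^ (f x).val := by
  calc ∑ b ∈ cosubcube a, walsh f b
      = ∑ x, (-1 : ℤ) ^ (f x).val * ∑ b ∈ cosubcube a, (-1) ^ (dotp b x).val := by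
        simp only [walsh, neg_one_pow_val_add, mul_sum]
        exact sum_comm
    _ = ∑ x ∈ subcube a, (-1 : ℤ) ^ (f x).val * #(cosubcube a) := by
        simp only [sum_cosubcube_neg_one_pow_dotp, mul_ite, mul_zero, sum_ite_mem, univ_inter]
    _ = _ := by rw [mul_sum]; simp only [mul_comm]

end Subcube

lemma anfCoeff_eq_natCast_sum {n : ℕ} (f : V n → ZMod 2) (a : V n) :
    anfCoeff f a = ((∑ x ∈ subcube a, (f x).val : ℕ) : ZMod 2) := by
  simp only [anfCoeff, filter_le_eq_subcube, Nat.cast_sum, ZMod.natCast_val, ZMod.cast_id', id]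

lemma two_pow_sub_two_pow_mul_sum_walsh_eq {n : ℕ} (f : V n → ZMod 2) (a : V n) :
    (2 : ℚ) ^ ((wt a : ℤ) - 1)
        - (2 : ℚ) ^ ((wt a : ℤ) - n - 1) *
            (∑ b ∈ univ.filter (fun b : V n => ∀ i, b i = 1 → a i = 0), walsh f b)
      = ((∑ x ∈ subcube a, (f x).val : ℕ) : ℚ) := by
  have hcard : (2 : ℚ) ^ wt a * #(cosubcube a) = 2 ^ n := by
    exact_mod_cast card_subcube a ▸ card_subcube_mul_card_cosubcube a
  have hC : (#(cosubcube a) : ℚ) ≠ 0 := by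
    rintro hC
    rw [hC, mul_zero] at hcard
    exact absurd hcard.symm (by positivity)
  have hhalf : (2 : ℚ) ^ ((wt a : ℤ) - n - 1) * #(cosubcube a) = 2⁻¹ := by
    rw [zpow_sub₀ two_ne_zero, zpow_sub₀ two_ne_zero, zpow_natCast, zpow_natCast, zpow_one,
      ← hcard]
    field_simp
  rw [filter_le_add_one_eq_cosubcube, sum_cosubcube_walsh, sum_neg_one_pow_val, card_subcube]
  push_cast
  rw [← mul_assoc, hhalf, zpow_sub₀ two_ne_zero, zpow_natCast, zpow_one]
  ring

theorem stmt11_general {n : ℕ} (f : V n → ZMod 2) (a : V n) :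
    ∃ k : ℤ,
      (2 : ℚ) ^ ((wt a : ℤ) - 1)
        - (2 : ℚ) ^ ((wt a : ℤ) - n - 1) *
            (∑ b ∈ Finset.univ.filter (fun b : V n => ∀ i, b i = 1 → a i = 0), walsh f b)
      = ((anfCoeff f a).val : ℚ) + 2 * k := by
  rw [two_pow_sub_two_pow_mul_sum_walsh_eq, anfCoeff_eq_natCast_sum, ZMod.val_natCast]
  generalize ∑ x ∈ subcube a, (f x).val = N
  have hN : (N : ℚ) = (N % 2 : ℕ) + 2 * (N / 2 : ℕ) := by
    exact_mod_cast (Nat.mod_add_div N 2).symm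
  exact ⟨(N / 2 : ℕ), by rw [hN, Int.cast_natCast]⟩

theorem stmt11 {n : ℕ} (f : V n → ZMod 2) (a : V n) (ha : 1 ≤ wt a) :
    ∃ k : ℤ,
      (2 : ℚ) ^ ((wt a : ℤ) - 1)
        - (2 : ℚ) ^ ((wt a : ℤ) - n - 1) *
            (∑ b ∈ Finset.univ.filter (fun b : V n => ∀ i, b i = 1 → a i = 0), walsh f b)
      = ((anfCoeff f a).val : ℚ) + 2 * k :=
  stmt11_general f a
end

section
/- Let n ≥ 5 be odd and let g: 𝔽₂ⁿ → 𝔽₂ be a Boolean function with |{x : g(x) = 0}| = 2^{n−1}. If there exist distinct coordinates i, j such that |{x : g(x)=0, x_i=0, x_j=0}| is odd, then the coefficient in the algebraic normal form of g at the monomial ∏_{k ≠ i,j} x_k (of degree n−2) is 1; in particular deg(g) ≥ n−2. -/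
/-!
The ANF coefficient of `g` at `a` is the sum of `g` over the `2 ^ wt a` points `x ⪯ a`, so as soon
as `wt a ≥ 1` it is congruent mod 2 to the number of zeros of `g` among those points. For
`a = 𝟏 + eⁱ + eʲ` these are exactly the points with `x i = x j = 0`.
-/

open Finset

/-- `x ∈ below a` is the relation `x ⪯ a`: the support of `x` lies in that of `a`. -/
def below {n : ℕ} (a : V n) : Finset (V n) :=
  Finset.univ.filter (fun x : V n => ∀ i, x i = 1 → a i = 1)

lemma ZMod.two_eq_zero_or_one (z : ZMod 2) : z = 0 ∨ z = 1 := by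
  revert z; decide

lemma mem_below_iff {n : ℕ} (a x : V n) : x ∈ below a ↔ ∀ i, a i = 0 → x i = 0 := by
  simp only [below, mem_filter, mem_univ, true_and]
  refine forall_congr' fun i => ?_
  rcases ZMod.two_eq_zero_or_one (a i) with ha | ha <;>
    rcases ZMod.two_eq_zero_or_one (x i) with hx | hx <;> simp [ha, hx]

lemma below_eq_piFinset {n : ℕ} (a : V n) :
    below a = Fintype.piFinset (fun i => if a i = 1 then univ else {0}) := by
  ext x
  rw [mem_below_iff, Fintype.mem_piFinset]
  refine forall_congr' fun i => ?_
  rcases ZMod.two_eq_zero_or_one (a i) with ha | ha <;> simp [ha]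

lemma card_below {n : ℕ} (a : V n) : (below a).card = 2 ^ wt a := by
  rw [below_eq_piFinset, Fintype.card_piFinset, wt, Finset.card_eq_sum_ones,
    ← Finset.prod_pow_eq_pow_sum, Finset.prod_filter]
  refine Finset.prod_congr rfl fun i _ => ?_
  split_ifs <;> simp

/-- Over `ZMod 2`, each `f x` equals `1 + [f x = 0]`. -/
lemma ZMod.sum_two_eq_card_add_card_filter_eq_zero {α : Type*} (s : Finset α) (f : α → ZMod 2) :
    ∑ x ∈ s, f x = s.card + (s.filter (fun x => f x = 0)).card := by
  have hf : ∀ x ∈ s, f x = 1 + if f x = 0 then 1 else 0 := fun x _ => by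
    rcases ZMod.two_eq_zero_or_one (f x) with h | h <;> simp [h]; decide
  rw [Finset.sum_congr rfl hf, Finset.sum_add_distrib, Finset.sum_boole]
  simp

lemma anfCoeff_eq_two_pow_wt_add_card {n : ℕ} (f : V n → ZMod 2) (a : V n) :
    anfCoeff f a = ((2 ^ wt a +
      (Finset.univ.filter (fun x : V n => f x = 0 ∧ ∀ i, a i = 0 → x i = 0)).card : ℕ) : ZMod 2) := by
  rw [anfCoeff, ← below, ZMod.sum_two_eq_card_add_card_filter_eq_zero, card_below, Nat.cast_add]
  congr 3
  ext x
  simp only [mem_filter, mem_univ, true_and, mem_below_iff, and_comm]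

lemma wt_le_degB {n : ℕ} {f : V n → ZMod 2} {a : V n} (ha : anfCoeff f a ≠ 0) : wt a ≤ degB f :=
  Finset.le_sup (f := wt) (by simpa using ha)

section PairComplement

variable {n : ℕ} {i j : Fin n}

lemma wt_pairCompl (hij : i ≠ j) :
    wt (fun l : Fin n => if l = i ∨ l = j then 0 else 1) = n - 2 := by
  have hsupp : Finset.univ.filter (fun l : Fin n => (if l = i ∨ l = j then 0 else 1 : ZMod 2) = 1) =
      ({i, j} : Finset (Fin n))ᶜ := by
    ext l
    simp
  rw [wt, hsupp, Finset.card_compl, Finset.card_pair hij, Fintype.card_fin]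

lemma vanishes_off_pairCompl_iff (x : V n) :
    (∀ l, (if l = i ∨ l = j then 0 else 1 : ZMod 2) = 0 → x l = 0) ↔ x i = 0 ∧ x j = 0 := by
  constructor
  · intro h
    exact ⟨h i (by simp), h j (by simp)⟩
  · rintro ⟨hi, hj⟩ l hl
    by_cases h : l = i ∨ l = j
    · rcases h with rfl | rfl <;> assumption
    · simp [h] at hl

end PairComplement

theorem stmt19_general {n : ℕ} (h5 : 5 ≤ n) (g : V n → ZMod 2)
    (i j : Fin n) (hij : i ≠ j)
    (hodd : Odd (Finset.univ.filter
      (fun x : V n => g x = 0 ∧ x i = 0 ∧ x j = 0)).card) :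
    anfCoeff g (fun l => if l = i ∨ l = j then 0 else 1) = 1 ∧ n - 2 ≤ degB g := by
  have hcoeff : anfCoeff g (fun l => if l = i ∨ l = j then 0 else 1) = 1 := by
    simp only [anfCoeff_eq_two_pow_wt_add_card, vanishes_off_pairCompl_iff, wt_pairCompl hij,
      ZMod.natCast_eq_one_iff_odd]
    exact (Nat.even_pow.2 ⟨even_two, by omega⟩).add_odd hodd
  refine ⟨hcoeff, ?_⟩
  rw [← wt_pairCompl hij]
  exact wt_le_degB (by simp [hcoeff])

theorem stmt19 {n : ℕ} (hn : Odd n) (h5 : 5 ≤ n) (g : V n → ZMod 2)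
    (hcard : (Finset.univ.filter (fun x : V n => g x = 0)).card = 2 ^ (n - 1))
    (i j : Fin n) (hij : i ≠ j)
    (hodd : Odd (Finset.univ.filter
      (fun x : V n => g x = 0 ∧ x i = 0 ∧ x j = 0)).card) :
    anfCoeff g (fun l => if l = i ∨ l = j then 0 else 1) = 1 ∧ n - 2 ≤ degB g :=
  stmt19_general h5 g i j hij hodd
end
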